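/- Let α, β ∈ 𝕃 have odd norms and suppose they are twins. Then α and β do not lie in the same parity class S_g: there is no g ∈ {1,i,j,k} with both α ∈ S_g and β ∈ S_g. -/

import Mathlib

/-!
Modulo 2 the coefficient vector of an element of `S_g` is either the indicator of `g` or of its
complement, so it has one or three odd coefficients. A sum of four squares is congruent mod 4 to
the number of odd terms, so twins, having equal norms, share the same odd coefficients. Their dot
product is then congruent mod 2 to the number of these, which is odd, contradicting orthogonality.
-/

open scoped Quaternion

/-- The four coefficients of a Lipschitz quaternion, indexed by the Klein four-group
`Bool × Bool`, where (false,false) ↦ 1, (true,false) ↦ i, (false,true) ↦ j,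
(true,true) ↦ k. -/
def coeff (α : ℍ[ℤ]) : Bool × Bool → ℤ
  | (false, false) => α.re
  | (true, false) => α.imI
  | (false, true) => α.imJ
  | (true, true) => α.imK

/-- α ∈ S_g : the coefficient indexed by g has parity different from each of the
other three coefficients. -/
def InS (g : Bool × Bool) (α : ℍ[ℤ]) : Prop :=
  ∀ h : Bool × Bool, h ≠ g → coeff α g % 2 ≠ coeff α h % 2

/-- Twins: orthogonal coefficient vectors of equal length. -/
def Twin (α β : ℍ[ℤ]) : Prop :=
  α.re * β.re + α.imI * β.imI + α.imJ * β.imJ + α.imK * β.imK = 0 ∧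
    Quaternion.normSq α = Quaternion.normSq β

open Finset

theorem Int.cast_zmod_two_eq_ite (n : ℤ) : (n : ZMod 2) = if Odd n then 1 else 0 := by
  split_ifs with h
  · exact ZMod.intCast_eq_one_iff_odd.mpr h
  · exact ZMod.intCast_eq_zero_iff_even.mpr (Int.not_odd_iff_even.mp h)

theorem Int.sq_cast_zmod_four_eq_ite (n : ℤ) : ((n ^ 2 : ℤ) : ZMod 4) = if Odd n then 1 else 0 := by
  have h4 : (4 : ZMod 4) = 0 := rfl
  rcases Int.even_or_odd' n with ⟨k, rfl | rfl⟩
  · rw [if_neg (by simp [parity_simps])]; push_cast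
    linear_combination (k : ZMod 4) ^ 2 * h4
  · rw [if_pos (by simp [parity_simps])]; push_cast
    linear_combination ((k : ZMod 4) ^ 2 + k) * h4

section

variable {ι : Type*} [Fintype ι]

theorem Int.cast_sum_mul_zmod_two (x y : ι → ℤ) :
    ((∑ i, x i * y i : ℤ) : ZMod 2) = #{i | Odd (x i) ∧ Odd (y i)} := by
  rw [natCast_card_filter]; push_cast
  refine sum_congr rfl fun i _ => ?_
  rw [Int.cast_zmod_two_eq_ite, Int.cast_zmod_two_eq_ite, ite_zero_mul_ite_zero, mul_one]

theorem Int.cast_sum_sq_zmod_four (x : ι → ℤ) :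
    ((∑ i, x i ^ 2 : ℤ) : ZMod 4) = #{i | Odd (x i)} := by
  rw [natCast_card_filter, Int.cast_sum]
  exact sum_congr rfl fun i _ => Int.sq_cast_zmod_four_eq_ite (x i)

end

theorem InS.odd_coeffs_eq {g : Bool × Bool} {α : ℍ[ℤ]} (hα : InS g α) :
    ({h | Odd (coeff α h)} : Finset _) = {g} ∨ ({h | Odd (coeff α h)} : Finset _) = {g}ᶜ := by
  have hodd (h : Bool × Bool) : Odd (coeff α h) ↔ (h = g ↔ Odd (coeff α g)) := by
    rcases eq_or_ne h g with rfl | hh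
    · simp
    · have := hα h hh
      simp only [hh, false_iff, Int.odd_iff]
      omega
  by_cases hg : Odd (coeff α g)
  · left; ext h; simp only [mem_filter, mem_univ, true_and, hodd h, hg, iff_true, mem_singleton]
  · right; ext h; simp only [mem_filter, mem_univ, true_and, hodd h, hg, iff_false, mem_compl, mem_singleton]

theorem sum_coeff_mul (α β : ℍ[ℤ]) :
    ∑ h, coeff α h * coeff β h = α.re * β.re + α.imI * β.imI + α.imJ * β.imJ + α.imK * β.imK := by
  simp [Fintype.sum_prod_type, coeff]; ring

theorem sum_coeff_sq_eq_normSq (α : ℍ[ℤ]) : ∑ h, coeff α h ^ 2 = Quaternion.normSq α := by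
  simp [Fintype.sum_prod_type, coeff, Quaternion.normSq_def']; ring

theorem twins_not_same_class_general (α β : ℍ[ℤ])
    (htwin : Twin α β) :
    ¬∃ g : Bool × Bool, InS g α ∧ InS g β := by
  rintro ⟨g, hα, hβ⟩
  have hdot := congrArg (Int.cast : ℤ → ZMod 2) htwin.1
  have hnorm := congrArg (Int.cast : ℤ → ZMod 4) htwin.2
  rw [← sum_coeff_mul, Int.cast_sum_mul_zmod_two, filter_and] at hdot
  rw [← sum_coeff_sq_eq_normSq, ← sum_coeff_sq_eq_normSq, Int.cast_sum_sq_zmod_four, Int.cast_sum_sq_zmod_four] at hnorm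
  rcases hα.odd_coeffs_eq with hA | hA <;> rcases hβ.odd_coeffs_eq with hB | hB
  · simp [hA, hB] at hdot
  · simp [hA, hB, card_compl] at hnorm; exact absurd hnorm (by decide)
  · simp [hA, hB, card_compl] at hnorm; exact absurd hnorm (by decide)
  · simp [hA, hB, card_compl] at hdot; exact absurd hdot (by decide)

/-- twins of odd norm cannot lie in the same parity class S_g. -/
theorem twins_not_same_class (α β : ℍ[ℤ])
    (hα : Odd (Quaternion.normSq α)) (hβ : Odd (Quaternion.normSq β))
    (htwin : Twin α β) :
    ¬∃ g : Bool × Bool, InS g α ∧ InS g β :=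
  twins_not_same_class_general α β htwin
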